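/- Let A be a Banach lattice algebra whose product has a two-sided identity e with ‖e‖ = 1. Then e ≥ 0, i.e., the multiplicative identity of a Banach lattice algebra is positive. -/

import Mathlib

/-!
Write `e = p - n` with `p = e⁺` and `n = e⁻`. Then `p = e + n` is positive with `‖p‖ ≤ ‖e‖ = 1`,
so the iterated left products `xₖ = p (p (⋯ (p p)))` (with `k + 1` factors) have norm at most `1`.
On the other hand `p p = p + n + n n` and `p n = n + n n`, so positivity of the product gives
`xₖ ≥ p + k n ≥ k n ≥ 0` by induction.
Solidity of the norm turns this into `k ‖n‖ ≤ 1` for every `k`, hence `n = 0`, i.e. `e ≥ 0`.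
-/

theorem norm_iterate_le_of_forall_norm_le {E : Type*} [SeminormedAddCommGroup E] {f : E → E}
    (hf : ∀ x, ‖f x‖ ≤ ‖x‖) (k : ℕ) (x : E) : ‖f^[k] x‖ ≤ ‖x‖ := by
  induction k with
  | zero => rfl
  | succ k ih => exact (Function.iterate_succ_apply' f k x ▸ hf _).trans ih

theorem eq_zero_of_forall_norm_nsmul_le {E : Type*} [NormedAddCommGroup E] [NormedSpace ℝ E]
    {x : E} {C : ℝ} (h : ∀ k : ℕ, ‖k • x‖ ≤ C) : x = 0 := by
  by_contra hx
  have hpos : 0 < ‖x‖ := norm_pos_iff.mpr hx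
  obtain ⟨k, hk⟩ := exists_nat_gt (C / ‖x‖)
  have hkx : (k : ℝ) * ‖x‖ ≤ C := by
    simpa only [RCLike.norm_nsmul ℝ, nsmul_eq_mul] using h k
  rw [div_lt_iff₀ hpos] at hk
  linarith

theorem norm_posPart_le {α : Type*} [NormedAddCommGroup α] [Lattice α] [HasSolidNorm α]
    [IsOrderedAddMonoid α] (a : α) : ‖a⁺‖ ≤ ‖a‖ :=
  norm_le_norm_of_abs_le_abs <| by
    rw [abs_of_nonneg (posPart_nonneg a)]
    exact sup_le (le_abs_self a) (abs_nonneg a)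

theorem norm_le_norm_of_nonneg_of_le {α : Type*} [NormedAddCommGroup α] [Lattice α]
    [HasSolidNorm α] [IsOrderedAddMonoid α] {a b : α} (ha : 0 ≤ a) (hab : a ≤ b) :
    ‖a‖ ≤ ‖b‖ :=
  norm_le_norm_of_abs_le_abs <| by rwa [abs_of_nonneg ha, abs_of_nonneg (ha.trans hab)]

section PositiveProduct

variable {A : Type*} [AddCommGroup A] [Lattice A] [IsOrderedAddMonoid A] [Module ℝ A]
  {mul : A →ₗ[ℝ] A →ₗ[ℝ] A}

theorem monotone_mul_left_of_mul_nonneg (mul_nonneg : ∀ a b : A, 0 ≤ a → 0 ≤ b → 0 ≤ mul a b)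
    {a : A} (ha : 0 ≤ a) : Monotone (mul a) := fun x y hxy => by
  simpa only [map_sub, sub_nonneg] using mul_nonneg a (y - x) ha (sub_nonneg.mpr hxy)

theorem posPart_add_nsmul_negPart_le_iterate
    (mul_nonneg : ∀ a b : A, 0 ≤ a → 0 ≤ b → 0 ≤ mul a b)
    {e : A} (one_mul : ∀ a : A, mul e a = a) (mul_one : ∀ a : A, mul a e = a) (k : ℕ) :
    e⁺ + k • e⁻ ≤ (mul e⁺)^[k] e⁺ := by
  set p := e⁺
  set n := e⁻
  have hp : 0 ≤ p := posPart_nonneg e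
  have hn : 0 ≤ n := negPart_nonneg e
  have p_eq : p = e + n := eq_add_of_sub_eq (posPart_sub_negPart e)
  have mul_p_left (x : A) : mul p x = x + mul n x := by
    rw [p_eq, map_add, LinearMap.add_apply, one_mul]
  have mul_n_p : mul n p = n + mul n n := by rw [p_eq, map_add, mul_one]
  have hnn : 0 ≤ mul n n := mul_nonneg n n hn hn
  induction k with
  | zero => simp
  | succ k ih =>
    calc p + (k + 1) • n
        = (p + n) + k • n := by rw [succ_nsmul]; abel
      _ ≤ (p + n + mul n n) + k • (n + mul n n) :=
          add_le_add (le_add_of_nonneg_right hnn)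
            (nsmul_le_nsmul_right (le_add_of_nonneg_right hnn) k)
      _ = mul p (p + k • n) := by
          rw [map_add, map_nsmul, mul_p_left, mul_p_left, mul_n_p]
          abel
      _ ≤ (mul p)^[k + 1] p := by
          rw [Function.iterate_succ_apply']
          exact monotone_mul_left_of_mul_nonneg mul_nonneg hp ih

end PositiveProduct

theorem identity_of_banach_lattice_algebra_is_positive
    {A : Type*} [NormedAddCommGroup A] [Lattice A] [HasSolidNorm A] [IsOrderedAddMonoid A]
    [NormedSpace ℝ A]
    -- the (bilinear, associative, submultiplicative, positive) product
    (mul : A →ₗ[ℝ] A →ₗ[ℝ] A)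
    (norm_mul_le : ∀ a b : A, ‖mul a b‖ ≤ ‖a‖ * ‖b‖)
    (mul_nonneg : ∀ a b : A, 0 ≤ a → 0 ≤ b → 0 ≤ mul a b)
    -- a two-sided identity of norm one
    (e : A) (one_mul : ∀ a : A, mul e a = a) (mul_one : ∀ a : A, mul a e = a)
    (norm_e : ‖e‖ = 1) :
    0 ≤ e := by
  have norm_p : ‖e⁺‖ ≤ 1 := norm_e ▸ norm_posPart_le e
  have mul_p_contracts (x : A) : ‖mul e⁺ x‖ ≤ ‖x‖ :=
    (norm_mul_le _ x).trans (mul_le_of_le_one_left (norm_nonneg x) norm_p)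
  have bounded (k : ℕ) : ‖k • e⁻‖ ≤ 1 :=
    calc ‖k • e⁻‖
        ≤ ‖(mul e⁺)^[k] e⁺‖ :=
          norm_le_norm_of_nonneg_of_le (nsmul_nonneg (negPart_nonneg e) k)
            ((le_add_of_nonneg_left (posPart_nonneg e)).trans
              (posPart_add_nsmul_negPart_le_iterate mul_nonneg one_mul mul_one k))
      _ ≤ ‖e⁺‖ := norm_iterate_le_of_forall_norm_le mul_p_contracts k _
      _ ≤ 1 := norm_p
  exact negPart_eq_zero.mp (eq_zero_of_forall_norm_nsmul_le bounded)
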